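/- Let V : ℤ^d → ℂ be Γ-periodic with Γ = q₁ℤ ⊕ ⋯ ⊕ q_dℤ, and let 1 ≤ s < t ≤ d. Then V is (s,t)-separable if and only if its discrete Fourier transform V̂(l) vanishes for every l = (l₁,…,l_d) in the fundamental domain W with l_s ≠ 0 and l_t ≠ 0. -/

import Mathlib

open scoped BigOperators

/-- Discrete Fourier transform over the fundamental domain `W = ∏ [0, qⱼ-1]`. -/
noncomputable def dft {d : ℕ} (q : Fin d → ℕ) (V : (Fin d → ℤ) → ℂ)
    (l : Fin d → ℤ) : ℂ :=
  (1 / ∏ j, (q j : ℂ)) *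
    ∑ n : (∀ j, Fin (q j)), V (fun j => ((n j : ℕ) : ℤ)) *
      Complex.exp (-(2 * Real.pi * Complex.I) *
        ∑ j, (l j : ℂ) * ((n j : ℕ) : ℂ) / (q j : ℂ))

/-- The average `[V]` of `V` over the periodicity cell. -/
noncomputable def avgW {d : ℕ} (q : Fin d → ℕ) (V : (Fin d → ℤ) → ℂ) : ℂ :=
  (1 / ∏ j, (q j : ℂ)) * ∑ n : (∀ j, Fin (q j)), V (fun j => ((n j : ℕ) : ℤ))

/-- `Γ`-periodicity for `Γ = q₁ℤ ⊕ ⋯ ⊕ q_dℤ`. -/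
def IsPeriodic {d : ℕ} (q : Fin d → ℕ) (V : (Fin d → ℤ) → ℂ) : Prop :=
  ∀ (n : Fin d → ℤ) (j : Fin d),
    V (fun i => n i + if i = j then (q i : ℤ) else 0) = V n

/-- `f` depends only on the coordinates in `S`. -/
def DependsOnlyOn {d : ℕ} (S : Set (Fin d)) (f : (Fin d → ℤ) → ℂ) : Prop :=
  ∀ n n' : Fin d → ℤ, (∀ j ∈ S, n j = n' j) → f n = f n'

/-- `(s,t)`-separability: `V = V_s + V_t` where `V_s` does not depend on coordinate `t`
and `V_t` does not depend on coordinate `s`. -/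
def SepPair {d : ℕ} (s t : Fin d) (V : (Fin d → ℤ) → ℂ) : Prop :=
  ∃ Vs Vt : (Fin d → ℤ) → ℂ,
    DependsOnlyOn ({t} : Set (Fin d))ᶜ Vs ∧
    DependsOnlyOn ({s} : Set (Fin d))ᶜ Vt ∧
    ∀ n, V n = Vs n + Vt n

/-! ### Auxiliary lemmas -/

lemma expsum (N : ℕ) (hN : 0 < N) (k : ℤ) :
    ∑ a : Fin N, Complex.exp ((2 * Real.pi * Complex.I) * ((k : ℂ) * ((a : ℕ) : ℂ) / (N : ℂ))) =
      if (N : ℤ) ∣ k then (N : ℂ) else 0 := by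
  have hN0 : (N : ℂ) ≠ 0 := Nat.cast_ne_zero.2 hN.ne'
  have h2pi : (2 * (Real.pi : ℂ) * Complex.I) ≠ 0 := by
    simp [Real.pi_ne_zero, Complex.I_ne_zero, Complex.ofReal_ne_zero]
  set z := Complex.exp ((2 * Real.pi * Complex.I) * (k / N)) with hz
  have hterm : ∀ a : Fin N,
      Complex.exp ((2 * Real.pi * Complex.I) * ((k : ℂ) * ((a : ℕ) : ℂ) / (N : ℂ))) = z ^ (a : ℕ) := by
    intro a
    rw [hz, ← Complex.exp_nat_mul]
    congr 1
    ring
  rw [Finset.sum_congr rfl (fun a _ => hterm a), Fin.sum_univ_eq_sum_range (fun i => z ^ i)]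
  by_cases hdvd : (N : ℤ) ∣ k
  · obtain ⟨c, hc⟩ := hdvd
    have hz1 : z = 1 := by
      rw [hz, hc]
      have : (2 * (Real.pi : ℂ) * Complex.I) * ((((N : ℤ) * c : ℤ) : ℂ) / (N : ℂ)) = c * (2 * Real.pi * Complex.I) := by
        push_cast
        field_simp
      rw [this, Complex.exp_int_mul_two_pi_mul_I]
    rw [if_pos ⟨c, hc⟩, hz1]
    simp
  · have hz1 : z ≠ 1 := by
      intro h
      rw [hz, Complex.exp_eq_one_iff] at h
      obtain ⟨m, hm⟩ := h
      apply hdvd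
      refine ⟨m, ?_⟩
      have h1 : (2 * (Real.pi:ℂ) * Complex.I) * ((k:ℂ)/N) = (2 * Real.pi * Complex.I) * m := by
        rw [hm]; ring
      have h2 : (k : ℂ) / N = m := mul_left_cancel₀ h2pi h1
      have h3 : (k : ℂ) = N * m := by
        rw [div_eq_iff hN0] at h2
        rw [h2]; ring
      exact_mod_cast h3
    have hzN : z ^ N = 1 := by
      rw [hz, ← Complex.exp_nat_mul]
      have : (N : ℂ) * ((2 * Real.pi * Complex.I) * (k / N)) = k * (2 * Real.pi * Complex.I) := by
        field_simp
      rw [this, Complex.exp_int_mul_two_pi_mul_I]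
    rw [geom_sum_eq hz1, hzN]
    simp [hdvd]

lemma periodic_step {d : ℕ} {q : Fin d → ℕ} {V : (Fin d → ℤ) → ℂ} (hV : IsPeriodic q V)
    (j : Fin d) (k : ℤ) (n : Fin d → ℤ) :
    V (fun i => n i + if i = j then (q i : ℤ) * k else 0) = V n := by
  induction k using Int.induction_on with
  | zero => simp
  | succ m ih =>
    have step := hV (fun i => n i + if i = j then (q i : ℤ) * m else 0) j
    have : (fun i => n i + if i = j then (q i : ℤ) * ((m : ℤ) + 1) else 0)
        = (fun i => (n i + if i = j then (q i : ℤ) * m else 0) + if i = j then (q i : ℤ) else 0) := by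
      funext i; split_ifs <;> ring
    rw [this, step, ih]
  | pred m ih =>
    have step := hV (fun i => n i + if i = j then (q i : ℤ) * (-(m : ℤ) - 1) else 0) j
    have : (fun i => (n i + if i = j then (q i : ℤ) * (-(m : ℤ) - 1) else 0) + if i = j then (q i : ℤ) else 0)
        = (fun i => n i + if i = j then (q i : ℤ) * (-(m : ℤ)) else 0) := by
      funext i; split_ifs <;> ring
    rw [this] at step
    rw [ih] at step
    exact step.symm

lemma periodic_shift {d : ℕ} {q : Fin d → ℕ} {V : (Fin d → ℤ) → ℂ} (hV : IsPeriodic q V)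
    (c : Fin d → ℤ) (n : Fin d → ℤ) :
    V (fun i => n i + (q i : ℤ) * c i) = V n := by
  have key : ∀ S : Finset (Fin d), ∀ n : Fin d → ℤ,
      V (fun i => n i + if i ∈ S then (q i : ℤ) * c i else 0) = V n := by
    intro S
    induction S using Finset.induction_on with
    | empty => intro n; simp
    | @insert a S ha ih =>
      intro n
      have : (fun i => n i + if i ∈ insert a S then (q i : ℤ) * c i else 0)
          = (fun i => (n i + if i ∈ S then (q i : ℤ) * c i else 0) + if i = a then (q i : ℤ) * c a else 0) := by
        funext i
        by_cases h : i = a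
        · subst h; simp [ha]
        · simp [h, Finset.mem_insert]
      rw [this, periodic_step hV a (c a) _, ih]
  have := key Finset.univ n
  simpa using this

lemma periodic_mod {d : ℕ} {q : Fin d → ℕ} {V : (Fin d → ℤ) → ℂ} (hV : IsPeriodic q V)
    (n : Fin d → ℤ) : V (fun j => n j % (q j : ℤ)) = V n := by
  have := periodic_shift hV (fun j => n j / (q j : ℤ)) (fun j => n j % (q j : ℤ))
  have h2 : (fun i => n i % (q i : ℤ) + (q i : ℤ) * (n i / (q i : ℤ))) = n := by
    funext i; exact Int.emod_add_mul_ediv (n i) (q i)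
  rw [h2] at this
  rw [this]

/-- The character `e^{2πi l·n/q}` for `l ∈ W`, `n ∈ ℤ^d`. -/
noncomputable def ch {d : ℕ} (q : Fin d → ℕ) (l : ∀ j, Fin (q j)) (n : Fin d → ℤ) : ℂ :=
  Complex.exp ((2 * Real.pi * Complex.I) * ∑ j, ((l j : ℕ) : ℂ) * ((n j : ℤ) : ℂ) / (q j : ℂ))

lemma ch_congr {d : ℕ} (q : Fin d → ℕ) (l : ∀ j, Fin (q j)) (t : Fin d) (hl : (l t : ℕ) = 0)
    (n n' : Fin d → ℤ) (hnn : ∀ j, j ≠ t → n j = n' j) : ch q l n = ch q l n' := by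
  unfold ch
  congr 2
  refine Finset.sum_congr rfl fun j _ => ?_
  by_cases hj : j = t
  · subst hj; rw [hl]; simp
  · rw [hnn j hj]

lemma inversion {d : ℕ} (q : Fin d → ℕ) (hq : ∀ j, 0 < q j) (V : (Fin d → ℤ) → ℂ)
    (hV : IsPeriodic q V) (n : Fin d → ℤ) :
    ∑ l : (∀ j, Fin (q j)), dft q V (fun j => ((l j : ℕ) : ℤ)) * ch q l n = V n := by
  have hqz : ∀ j, ((q j : ℤ)) ≠ 0 := fun j => by exact_mod_cast (hq j).ne'
  have hQ : (∏ j, (q j : ℂ)) ≠ 0 :=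
    Finset.prod_ne_zero_iff.2 fun j _ => Nat.cast_ne_zero.2 (hq j).ne'
  have hmod : ∀ j, 0 ≤ n j % (q j : ℤ) := fun j => Int.emod_nonneg _ (hqz j)
  have hmodlt : ∀ j, n j % (q j : ℤ) < q j := fun j => Int.emod_lt_of_pos _ (by exact_mod_cast hq j)
  set m₀ : ∀ j, Fin (q j) := fun j => ⟨(n j % (q j : ℤ)).toNat, by
    have h1 := hmod j; have h2 := hmodlt j; omega⟩ with hm₀
  have hm₀cast : ∀ j, ((m₀ j : ℕ) : ℤ) = n j % (q j : ℤ) := fun j => by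
    simp [hm₀, Int.toNat_of_nonneg (hmod j)]
  have key : ∀ (l : ∀ j, Fin (q j)) (m : ∀ j, Fin (q j)),
      Complex.exp (-(2 * Real.pi * Complex.I) *
          ∑ j, (((((l j : ℕ) : ℤ)) : ℂ)) * ((m j : ℕ) : ℂ) / (q j : ℂ)) * ch q l n
        = ∏ j, Complex.exp ((2 * Real.pi * Complex.I) *
            ((((n j - ((m j : ℕ) : ℤ)) : ℤ) : ℂ) * ((l j : ℕ) : ℂ) / (q j : ℂ))) := by
    intro l m
    rw [ch, ← Complex.exp_add, ← Complex.exp_sum]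
    congr 1
    rw [Finset.mul_sum, Finset.mul_sum, ← Finset.sum_add_distrib]
    refine Finset.sum_congr rfl fun j _ => ?_
    push_cast
    ring
  calc ∑ l : (∀ j, Fin (q j)), dft q V (fun j => ((l j : ℕ) : ℤ)) * ch q l n
      = (1 / ∏ j, (q j : ℂ)) * ∑ l : (∀ j, Fin (q j)), ∑ m : (∀ j, Fin (q j)),
          V (fun j => ((m j : ℕ) : ℤ)) * ∏ j, Complex.exp ((2 * Real.pi * Complex.I) *
            ((((n j - ((m j : ℕ) : ℤ)) : ℤ) : ℂ) * ((l j : ℕ) : ℂ) / (q j : ℂ))) := by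
        rw [Finset.mul_sum]
        refine Finset.sum_congr rfl fun l _ => ?_
        rw [dft, mul_assoc, Finset.sum_mul]
        congr 1
        refine Finset.sum_congr rfl fun m _ => ?_
        rw [mul_assoc, key l m]
    _ = (1 / ∏ j, (q j : ℂ)) * ∑ m : (∀ j, Fin (q j)),
          V (fun j => ((m j : ℕ) : ℤ)) * ∑ l : (∀ j, Fin (q j)), ∏ j,
            Complex.exp ((2 * Real.pi * Complex.I) *
            ((((n j - ((m j : ℕ) : ℤ)) : ℤ) : ℂ) * ((l j : ℕ) : ℂ) / (q j : ℂ))) := by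
        rw [Finset.sum_comm]
        congr 1
        exact Finset.sum_congr rfl fun m _ => (Finset.mul_sum _ _ _).symm
    _ = (1 / ∏ j, (q j : ℂ)) * ∑ m : (∀ j, Fin (q j)),
          V (fun j => ((m j : ℕ) : ℤ)) *
            (if (∀ j, (q j : ℤ) ∣ (n j - ((m j : ℕ) : ℤ))) then (∏ j, (q j : ℂ)) else 0) := by
        congr 1
        refine Finset.sum_congr rfl fun m _ => ?_
        congr 1
        rw [← Fintype.prod_sum (fun j (a : Fin (q j)) => Complex.exp ((2 * Real.pi * Complex.I) *
            ((((n j - ((m j : ℕ) : ℤ)) : ℤ) : ℂ) * ((a : ℕ) : ℂ) / (q j : ℂ))))]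
        have : ∀ j, (∑ a : Fin (q j), Complex.exp ((2 * Real.pi * Complex.I) *
            ((((n j - ((m j : ℕ) : ℤ)) : ℤ) : ℂ) * ((a : ℕ) : ℂ) / (q j : ℂ))))
            = if (q j : ℤ) ∣ (n j - ((m j : ℕ) : ℤ)) then ((q j : ℕ) : ℂ) else 0 :=
          fun j => expsum (q j) (hq j) _
        rw [Finset.prod_congr rfl fun j _ => this j]
        by_cases hall : ∀ j, (q j : ℤ) ∣ (n j - ((m j : ℕ) : ℤ))
        · rw [if_pos hall]
          exact Finset.prod_congr rfl fun j _ => if_pos (hall j)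
        · rw [if_neg hall]
          push_neg at hall
          obtain ⟨j, hj⟩ := hall
          exact Finset.prod_eq_zero (Finset.mem_univ j) (if_neg hj)
    _ = (1 / ∏ j, (q j : ℂ)) * (V (fun j => ((m₀ j : ℕ) : ℤ)) * (∏ j, (q j : ℂ))) := by
        congr 1
        rw [Finset.sum_eq_single m₀]
        · rw [if_pos]
          intro j
          rw [hm₀cast j]
          exact ⟨n j / (q j : ℤ), by have := Int.emod_add_mul_ediv (n j) (q j); linarith⟩
        · intro m _ hm
          rw [if_neg, mul_zero]
          intro hall
          apply hm
          funext j
          have hdvd := hall j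
          have h1 : ((m j : ℕ) : ℤ) % (q j : ℤ) = n j % (q j : ℤ) :=
            Int.modEq_iff_dvd.mpr hdvd
          have h2 : ((m j : ℕ) : ℤ) % (q j : ℤ) = ((m j : ℕ) : ℤ) :=
            Int.emod_eq_of_lt (by positivity) (by exact_mod_cast (m j).2)
          apply Fin.ext
          have := hm₀cast j
          simp only [hm₀] at this ⊢
          omega
        · intro h
          exact absurd (Finset.mem_univ m₀) h
    _ = V (fun j => ((m₀ j : ℕ) : ℤ)) := by
        field_simp
    _ = V n := by
        have : (fun j => ((m₀ j : ℕ) : ℤ)) = (fun j => n j % (q j : ℤ)) := funext hm₀cast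
        rw [this, periodic_mod hV]

lemma sum_mul_coord_eq_zero {d : ℕ} (q : Fin d → ℕ) (hq : ∀ j, 0 < q j) (t : Fin d)
    (h : (∀ j, Fin (q j)) → ℂ)
    (hh : ∀ n n' : ∀ j, Fin (q j), (∀ j, j ≠ t → n j = n' j) → h n = h n')
    (g : Fin (q t) → ℂ) (hg : ∑ a, g a = 0) :
    ∑ n : (∀ j, Fin (q j)), h n * g (n t) = 0 := by
  set E := Equiv.piSplitAt t (fun j => Fin (q j)) with hE
  have := Equiv.sum_comp E.symm (fun n => h n * g (n t))
  rw [← this, Fintype.sum_prod_type, Finset.sum_comm]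
  refine Finset.sum_eq_zero fun r _ => ?_
  set a₀ : Fin (q t) := ⟨0, hq t⟩ with ha₀
  have hcoord : ∀ a : Fin (q t), (E.symm (a, r)) t = a := by
    intro a; simp [hE]
  have hconst : ∀ a : Fin (q t), h (E.symm (a, r)) = h (E.symm (a₀, r)) := by
    intro a
    apply hh
    intro j hj
    simp [hE, hj]
  calc ∑ a : Fin (q t), h (E.symm (a, r)) * g ((E.symm (a, r)) t)
      = ∑ a : Fin (q t), h (E.symm (a₀, r)) * g a := by
        refine Finset.sum_congr rfl fun a _ => ?_
        rw [hconst a, hcoord a]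
    _ = h (E.symm (a₀, r)) * ∑ a : Fin (q t), g a := by rw [Finset.mul_sum]
    _ = 0 := by rw [hg, mul_zero]

lemma dft_zero_of_dependsOff {d : ℕ} (q : Fin d → ℕ) (hq : ∀ j, 0 < q j) (t : Fin d)
    (W : (Fin d → ℤ) → ℂ) (hW : DependsOnlyOn ({t} : Set (Fin d))ᶜ W)
    (l : ∀ j, Fin (q j)) (hlt : (l t : ℕ) ≠ 0) :
    dft q W (fun j => ((l j : ℕ) : ℤ)) = 0 := by
  rw [dft]
  have step : ∀ n : (∀ j, Fin (q j)),
      W (fun j => ((n j : ℕ) : ℤ)) * Complex.exp (-(2 * Real.pi * Complex.I) *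
        ∑ j, ((((l j : ℕ) : ℤ) : ℂ)) * ((n j : ℕ) : ℂ) / (q j : ℂ))
      = (W (fun j => ((n j : ℕ) : ℤ)) * Complex.exp (-(2 * Real.pi * Complex.I) *
          ∑ j ∈ Finset.univ.erase t, ((l j : ℕ) : ℂ) * ((n j : ℕ) : ℂ) / (q j : ℂ)))
        * Complex.exp (-(2 * Real.pi * Complex.I) *
            (((l t : ℕ) : ℂ) * ((n t : ℕ) : ℂ) / (q t : ℂ))) := by
    intro n
    conv_rhs => rw [mul_assoc, ← Complex.exp_add]
    congr 2
    rw [← Finset.sum_erase_add _ _ (Finset.mem_univ t)]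
    push_cast
    ring
  rw [Finset.sum_congr rfl fun n _ => step n]
  refine mul_eq_zero_of_right _ ?_
  refine sum_mul_coord_eq_zero q hq t
    (fun n => W (fun j => ((n j : ℕ) : ℤ)) * Complex.exp (-(2 * Real.pi * Complex.I) *
      ∑ j ∈ Finset.univ.erase t, ((l j : ℕ) : ℂ) * ((n j : ℕ) : ℂ) / (q j : ℂ)))
    ?_
    (fun a => Complex.exp (-(2 * Real.pi * Complex.I) *
      (((l t : ℕ) : ℂ) * ((a : ℕ) : ℂ) / (q t : ℂ)))) ?_
  · intro n n' hnn
    have h1 : W (fun j => ((n j : ℕ) : ℤ)) = W (fun j => ((n' j : ℕ) : ℤ)) := by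
      apply hW
      intro j hj
      have hjt : j ≠ t := by simpa using hj
      rw [hnn j hjt]
    have h2 : (∑ j ∈ Finset.univ.erase t, ((l j : ℕ) : ℂ) * ((n j : ℕ) : ℂ) / (q j : ℂ))
        = ∑ j ∈ Finset.univ.erase t, ((l j : ℕ) : ℂ) * ((n' j : ℕ) : ℂ) / (q j : ℂ) := by
      refine Finset.sum_congr rfl fun j hj => ?_
      rw [hnn j (Finset.ne_of_mem_erase hj)]
    simp only [h1, h2]
  · have : ∀ a : Fin (q t), Complex.exp (-(2 * Real.pi * Complex.I) *
        (((l t : ℕ) : ℂ) * ((a : ℕ) : ℂ) / (q t : ℂ)))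
        = Complex.exp ((2 * Real.pi * Complex.I) *
          ((((-(l t : ℕ) : ℤ)) : ℂ) * ((a : ℕ) : ℂ) / (q t : ℂ))) := by
      intro a
      congr 1
      push_cast
      ring
    rw [Finset.sum_congr rfl fun a _ => this a, expsum (q t) (hq t) _]
    rw [if_neg]
    rw [Int.dvd_neg, Int.natCast_dvd_natCast]
    intro hd
    exact hlt (Nat.eq_zero_of_dvd_of_lt hd (l t).2)

/-- Lemma 2.3: `V` is `(s,t)`-separable iff `V̂(l) = 0` whenever `l_s ≠ 0` and `l_t ≠ 0`. -/
theorem sepPair_iff_dft_vanish {d : ℕ} (q : Fin d → ℕ) (hq : ∀ j, 0 < q j)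
    (V : (Fin d → ℤ) → ℂ) (hV : IsPeriodic q V) (s t : Fin d) (hst : s < t) :
    SepPair s t V ↔
      ∀ l : ∀ j, Fin (q j), (l s : ℕ) ≠ 0 → (l t : ℕ) ≠ 0 →
        dft q V (fun j => ((l j : ℕ) : ℤ)) = 0 := by
  constructor
  · rintro ⟨Vs, Vt, hVs, hVt, hsum⟩ l hls hlt
    have hsplit : dft q V (fun j => ((l j : ℕ) : ℤ)) =
        dft q Vs (fun j => ((l j : ℕ) : ℤ)) + dft q Vt (fun j => ((l j : ℕ) : ℤ)) := by
      simp only [dft, hsum]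
      rw [← mul_add, ← Finset.sum_add_distrib]
      congr 1
      refine Finset.sum_congr rfl fun n _ => ?_
      ring
    rw [hsplit, dft_zero_of_dependsOff q hq t Vs hVs l hlt,
        dft_zero_of_dependsOff q hq s Vt hVt l hls, add_zero]
  · intro hvanish
    refine ⟨fun n => ∑ l : (∀ j, Fin (q j)), if (l t : ℕ) = 0 then
        dft q V (fun j => ((l j : ℕ) : ℤ)) * ch q l n else 0,
      fun n => ∑ l : (∀ j, Fin (q j)), if (l t : ℕ) = 0 then 0 else
        dft q V (fun j => ((l j : ℕ) : ℤ)) * ch q l n, ?_, ?_, ?_⟩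
    · intro n n' hnn
      refine Finset.sum_congr rfl fun l _ => ?_
      by_cases hl : (l t : ℕ) = 0
      · rw [if_pos hl, if_pos hl,
          ch_congr q l t hl n n' fun j hj => hnn j (by simp [hj])]
      · rw [if_neg hl, if_neg hl]
    · intro n n' hnn
      refine Finset.sum_congr rfl fun l _ => ?_
      by_cases hl : (l t : ℕ) = 0
      · rw [if_pos hl, if_pos hl]
      · rw [if_neg hl, if_neg hl]
        by_cases hs : (l s : ℕ) = 0
        · rw [ch_congr q l s hs n n' fun j hj => hnn j (by simp [hj])]
        · rw [hvanish l hs hl, zero_mul, zero_mul]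
    · intro n
      rw [← inversion q hq V hV n, ← Finset.sum_add_distrib]
      refine Finset.sum_congr rfl fun l _ => ?_
      by_cases hl : (l t : ℕ) = 0 <;> simp [hl]
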